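/- Let G be a strongly connected signed digraph. Then the signed network ẋ = −W·L·x achieves state stability if and only if G is structurally unbalanced; precisely: G is structurally unbalanced if and only if for every initial state x₀ ∈ ℝⁿ, the solution x(t) = exp(−t·W·L)·x₀ satisfies lim_{t→∞} x(t) = 0. -/

import Mathlib

/-!
Strong connectivity gives `L̄` a maximum principle: `ker L̄` consists of the constant vectors and
every `L̄ᵢᵢ + t` with `t ≥ 0` is nonsingular, so the weights `wᵢ = det L̄ᵢᵢ` are positive. Since
`L̄ · adj L̄ = 0`, the columns of `adj L̄` are constant, i.e. every row of `adj L̄` is `w`, and then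
`adj L̄ · L̄ = 0` says `wᵀ L̄ = 0`. So the weighted in- and out-degrees of `W A` agree, which turns
`2 xᵀ W L x` into `Φ_e(x) = Σ wᵢ |aᵢⱼ| (xᵢ - sgn(aᵢⱼ) xⱼ)²`. For an unbalanced graph `Φ_e`
vanishes only at `0`, so `|x(t)|²` decays exponentially; for a graph balanced by a gauge `σ`,
`L σ = 0` and the equilibrium `σ` does not tend to zero.
-/

open Matrix BigOperators Filter

/-- In-degree of node `i`: sum of absolute values of the `i`-th row of `A`. -/
noncomputable def inDeg {n : ℕ} (A : Matrix (Fin n) (Fin n) ℝ) (i : Fin n) : ℝ := ∑ j, |A i j|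

/-- Laplacian `L = Δ − A` of the signed digraph with adjacency matrix `A`. -/
noncomputable def lapOf {n : ℕ} (A : Matrix (Fin n) (Fin n) ℝ) : Matrix (Fin n) (Fin n) ℝ :=
  Matrix.diagonal (inDeg A) - A

/-- Laplacian `L̄ = Δ − Ā` of the induced unsigned digraph. -/
noncomputable def lapBar {n : ℕ} (A : Matrix (Fin n) (Fin n) ℝ) : Matrix (Fin n) (Fin n) ℝ :=
  Matrix.diagonal (inDeg A) - Matrix.of (fun i j => |A i j|)

/-- `det(L̄_ii)`: determinant of `L̄` with its `i`-th row and column removed. -/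
noncomputable def minorDet {n : ℕ} (A : Matrix (Fin n) (Fin n) ℝ) (i : Fin n) : ℝ :=
  Matrix.det ((lapBar A).submatrix (fun k : {j : Fin n // j ≠ i} => (k : Fin n))
    (fun k : {j : Fin n // j ≠ i} => (k : Fin n)))

/-- `W = diag(det(L̄_11), …, det(L̄_nn))`. -/
noncomputable def Wmat {n : ℕ} (A : Matrix (Fin n) (Fin n) ℝ) : Matrix (Fin n) (Fin n) ℝ :=
  Matrix.diagonal (minorDet A)

/-- Mirror adjacency matrix `Â = (W·A + Aᵀ·W)/2`. -/
noncomputable def mirrorAdj {n : ℕ} (A : Matrix (Fin n) (Fin n) ℝ) : Matrix (Fin n) (Fin n) ℝ :=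
  (1/2 : ℝ) • (Wmat A * A + Aᵀ * Wmat A)

/-- Mirror Laplacian `L̂ = (W·L + Lᵀ·W)/2`. -/
noncomputable def mirrorLap {n : ℕ} (A : Matrix (Fin n) (Fin n) ℝ) : Matrix (Fin n) (Fin n) ℝ :=
  (1/2 : ℝ) • (Wmat A * lapOf A + (lapOf A)ᵀ * Wmat A)

/-- `(j, i)` is a directed edge when `a_ij ≠ 0`; strong connectivity: a directed
path between every ordered pair of distinct nodes. -/
def StronglyConnected {n : ℕ} (A : Matrix (Fin n) (Fin n) ℝ) : Prop :=
  ∀ i j : Fin n, i ≠ j → Relation.TransGen (fun u v => A v u ≠ 0) i j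

/-- `σ` is the diagonal of a gauge transformation: each entry is `±1`. -/
def IsGauge {n : ℕ} (σ : Fin n → ℝ) : Prop := ∀ i, σ i = 1 ∨ σ i = -1

/-- Structural balance: there is a gauge transformation `D = diag σ` with all entries
of `D·A·D` (entrywise `σ i * A i j * σ j`) nonnegative. -/
def StructBalanced {n : ℕ} (A : Matrix (Fin n) (Fin n) ℝ) : Prop :=
  ∃ σ : Fin n → ℝ, IsGauge σ ∧ ∀ i j, 0 ≤ σ i * A i j * σ j

/-- Improved Laplacian potential function
`Φ_e(x) = Σ_i Σ_j det(L̄_ii)·|a_ij|·(x_i − sgn(a_ij)·x_j)²`. -/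
noncomputable def PhiE {n : ℕ} (A : Matrix (Fin n) (Fin n) ℝ) (x : Fin n → ℝ) : ℝ :=
  ∑ i, ∑ j, minorDet A i * |A i j| * (x i - Real.sign (A i j) * x j) ^ 2

def mulVecFlipCLM {ι : Type*} [Fintype ι] (x : ι → ℝ) : Matrix ι ι ℝ →L[ℝ] ι → ℝ where
  toFun P := P *ᵥ x
  map_add' P Q := add_mulVec P Q x
  map_smul' c P := smul_mulVec c P x
  cont := continuous_id.matrix_mulVec continuous_const

section LinearFlow

variable {ι : Type*} [Fintype ι] [DecidableEq ι]

attribute [local instance] Matrix.linftyOpNormedRing Matrix.linftyOpNormedAlgebra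

theorem hasDerivAt_exp_smul_mulVec (M : Matrix ι ι ℝ) (x₀ : ι → ℝ) (t : ℝ) :
    HasDerivAt (fun t : ℝ => NormedSpace.exp (t • M) *ᵥ x₀)
      (M *ᵥ (NormedSpace.exp (t • M) *ᵥ x₀)) t :=
  ((mulVecFlipCLM x₀).hasFDerivAt.comp_hasDerivAt t (hasDerivAt_exp_smul_const' M t)).congr_deriv
    (mulVec_mulVec _ _ _).symm

theorem exp_mulVec_eq_self {N : Matrix ι ι ℝ} {v : ι → ℝ} (h : N *ᵥ v = 0) :
    NormedSpace.exp N *ᵥ v = v := by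
  have hsum := (NormedSpace.exp_series_hasSum_exp' (𝕂 := ℝ) N).mapL (mulVecFlipCLM v)
  refine hsum.unique ?_
  convert hasSum_single (f := fun k : ℕ => mulVecFlipCLM v ((k.factorial⁻¹ : ℝ) • N ^ k)) 0
    (fun k hk => ?_) using 1
  · simp [mulVecFlipCLM]
  · obtain ⟨k, rfl⟩ := Nat.exists_eq_succ_of_ne_zero hk
    simp [mulVecFlipCLM, pow_succ, ← mulVec_mulVec, h]

end LinearFlow

theorem exists_pos_mul_norm_sq_le {E : Type*} [NormedAddCommGroup E] [NormedSpace ℝ E]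
    [FiniteDimensional ℝ E] {q : E → ℝ} (hq : Continuous q)
    (hsmul : ∀ (r : ℝ) x, q (r • x) = r ^ 2 * q x) (hpos : ∀ x ≠ 0, 0 < q x) :
    ∃ c > 0, ∀ x, c * ‖x‖ ^ 2 ≤ q x := by
  have hq0 : q 0 = 0 := by simpa using hsmul 0 0
  have hnormalize : ∀ x : E, x ≠ 0 → ‖x‖⁻¹ • x ∈ Metric.sphere (0 : E) 1 := fun x hx => by
    simp [norm_smul, hx]
  rcases (Metric.sphere (0 : E) 1).eq_empty_or_nonempty with hS | hS
  · refine ⟨1, one_pos, fun x => ?_⟩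
    obtain rfl : x = 0 := by
      by_contra hx
      simpa [hS] using hnormalize x hx
    simp [hq0]
  obtain ⟨u, hu, hmin⟩ := (isCompact_sphere (0 : E) 1).exists_isMinOn hS hq.continuousOn
  refine ⟨q u, hpos u (ne_zero_of_mem_sphere one_ne_zero ⟨u, hu⟩), fun x => ?_⟩
  rcases eq_or_ne x 0 with rfl | hx
  · simp [hq0]
  have hle := hmin (hnormalize x hx)
  rw [Set.mem_ofPred_eq, hsmul, inv_pow] at hle
  have hx2 : 0 < ‖x‖ ^ 2 := by positivity
  calc q u * ‖x‖ ^ 2 ≤ (‖x‖ ^ 2)⁻¹ * q x * ‖x‖ ^ 2 := by gcongr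
    _ = q x := by field_simp

theorem exists_pos_mul_dotProduct_self_le {ι : Type*} [Fintype ι] {M : Matrix ι ι ℝ}
    (hM : ∀ x ≠ 0, 0 < x ⬝ᵥ (M *ᵥ x)) : ∃ c > 0, ∀ x, c * (x ⬝ᵥ x) ≤ x ⬝ᵥ (M *ᵥ x) := by
  obtain ⟨c, hc, hle⟩ := exists_pos_mul_norm_sq_le
    (q := fun x : EuclideanSpace ℝ ι => x.ofLp ⬝ᵥ (M *ᵥ x.ofLp)) (by fun_prop)
    (fun r x => by simp [mulVec_smul]; ring)
    (fun x hx => hM _ (by simpa using hx))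
  refine ⟨c, hc, fun x => ?_⟩
  have := hle (WithLp.toLp 2 x)
  rw [EuclideanSpace.norm_sq_eq] at this
  simpa [dotProduct, sq] using this

section Decay

variable {ι : Type*} [Fintype ι]

theorem norm_le_sqrt_dotProduct_self (x : ι → ℝ) : ‖x‖ ≤ √(x ⬝ᵥ x) :=
  (pi_norm_le_iff_of_nonneg (Real.sqrt_nonneg _)).mpr fun i => by
    rw [Real.norm_eq_abs]
    exact Real.abs_le_sqrt (by
      simpa [sq, dotProduct] using Finset.single_le_sum (f := fun j => x j * x j)
        (fun j _ => mul_self_nonneg _) (Finset.mem_univ i))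

theorem hasDerivAt_dotProduct_self {g : ℝ → ι → ℝ} {g' : ι → ℝ} {t : ℝ} (hg : HasDerivAt g g' t) :
    HasDerivAt (fun s => g s ⬝ᵥ g s) (2 * (g t ⬝ᵥ g')) t := by
  have hcomp i : HasDerivAt (fun s => g s i) (g' i) t := hasDerivAt_pi.mp hg i
  refine (HasDerivAt.fun_sum (u := Finset.univ) fun i _ => (hcomp i).mul (hcomp i)).congr_deriv ?_
  simp only [dotProduct, Finset.mul_sum]
  exact Finset.sum_congr rfl fun i _ => by ring

theorem tendsto_exp_neg_smul_mulVec_of_coercive [DecidableEq ι] {M : Matrix ι ι ℝ} {c : ℝ}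
    (hc : 0 < c) (hM : ∀ x, c * (x ⬝ᵥ x) ≤ x ⬝ᵥ (M *ᵥ x)) (x₀ : ι → ℝ) :
    Tendsto (fun t : ℝ => NormedSpace.exp (-(t • M)) *ᵥ x₀) atTop (nhds 0) := by
  set g : ℝ → ι → ℝ := fun t => NormedSpace.exp (t • -M) *ᵥ x₀
  set φ : ℝ → ℝ := fun t => g t ⬝ᵥ g t
  have hφ t : HasDerivAt φ (-(2 * (g t ⬝ᵥ (M *ᵥ g t)))) t := by
    refine (hasDerivAt_dotProduct_self (hasDerivAt_exp_smul_mulVec (-M) x₀ t)).congr_deriv ?_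
    rw [neg_mulVec, dotProduct_neg, mul_neg]
  -- `e^{2ct} φ(t)` is nonincreasing, so `φ` decays like `e^{-2ct}`
  have hψ t : HasDerivAt (fun s => Real.exp (2 * c * s) * φ s)
      (2 * c * Real.exp (2 * c * t) * φ t
        + Real.exp (2 * c * t) * -(2 * (g t ⬝ᵥ (M *ᵥ g t)))) t := by
    have he := ((hasDerivAt_id t).const_mul (2 * c)).exp
    simp only [id, mul_one] at he
    exact (he.mul (hφ t)).congr_deriv (by ring)
  have hanti : Antitone fun s => Real.exp (2 * c * s) * φ s :=
    antitone_of_deriv_nonpos (fun t => (hψ t).differentiableAt) fun t => by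
      rw [(hψ t).deriv]
      nlinarith [hM (g t), Real.exp_pos (2 * c * t)]
  have hbound t (ht : 0 ≤ t) : φ t ≤ Real.exp (-(2 * c * t)) * φ 0 := by
    have h := hanti ht
    simp only [mul_zero, Real.exp_zero, one_mul] at h
    calc φ t = Real.exp (-(2 * c * t)) * (Real.exp (2 * c * t) * φ t) := by
          rw [← mul_assoc, ← Real.exp_add, neg_add_cancel, Real.exp_zero, one_mul]
      _ ≤ Real.exp (-(2 * c * t)) * φ 0 := by gcongr
  have hdecay : Tendsto (fun t => Real.exp (-(2 * c * t)) * φ 0) atTop (nhds 0) := by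
    simpa using (Real.tendsto_exp_neg_atTop_nhds_zero.comp
      (tendsto_id.const_mul_atTop (by positivity : 0 < 2 * c))).mul_const (φ 0)
  have hφ : Tendsto φ atTop (nhds 0) :=
    squeeze_zero' (Eventually.of_forall fun t => Finset.sum_nonneg fun i _ => mul_self_nonneg _)
      (eventually_atTop.mpr ⟨0, hbound⟩) hdecay
  simp only [← smul_neg]
  exact squeeze_zero_norm (fun t => norm_le_sqrt_dotProduct_self (g t)) (by simpa using hφ.sqrt)

end Decay

theorem Matrix.mulVec_insertNth_zero_succAbove {R : Type*} [CommRing R] {n : ℕ}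
    (N : Matrix (Fin (n + 1)) (Fin (n + 1)) R) (i : Fin (n + 1)) (w : Fin n → R) (a : Fin n) :
    (N *ᵥ Fin.insertNth i 0 w) (i.succAbove a) = (N.submatrix i.succAbove i.succAbove *ᵥ w) a := by
  simp [mulVec, dotProduct, Fin.sum_univ_succAbove _ i]

theorem Matrix.det_pos_of_forall_nonneg_det_add_smul_one_ne_zero {ι : Type*} [Fintype ι]
    [DecidableEq ι] (B : Matrix ι ι ℝ) (h : ∀ t : ℝ, 0 ≤ t → (B + t • 1).det ≠ 0) : 0 < B.det := by
  have hcont : Continuous fun t : ℝ => (B + t • (1 : Matrix ι ι ℝ)).det := by fun_prop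
  -- `t ↦ det (B + t • 1)` has no zero on `[0, ∞)`, and it is positive at `t = s⁻¹` for small
  -- `s > 0` because `det (B + s⁻¹ • 1) = s⁻ᵈ det (s • B + 1)` with `det (s • B + 1) → 1`
  obtain ⟨s, hs_det, hs⟩ : ∃ s : ℝ, 0 < (s • B + 1).det ∧ 0 < s := by
    have hlim : Tendsto (fun s : ℝ => (s • B + 1).det) (nhdsWithin 0 (Set.Ioi 0)) (nhds 1) := by
      have : Continuous fun s : ℝ => (s • B + 1).det := by fun_prop
      simpa using this.continuousWithinAt.tendsto (x := 0) (s := Set.Ioi 0)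
    exact ((hlim.eventually (eventually_gt_nhds one_pos)).and self_mem_nhdsWithin).exists
  have hpos : 0 < (B + s⁻¹ • (1 : Matrix ι ι ℝ)).det := by
    rw [show B + s⁻¹ • (1 : Matrix ι ι ℝ) = s⁻¹ • (s • B + 1) by
      rw [smul_add, smul_smul, inv_mul_cancel₀ hs.ne', one_smul], det_smul]
    positivity
  by_contra hneg
  obtain ⟨t, ht, ht0⟩ := intermediate_value_Icc (inv_pos.mpr hs).le hcont.continuousOn
    (show (0 : ℝ) ∈ Set.Icc _ _ by simpa using ⟨not_lt.mp hneg, hpos.le⟩)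
  exact h t ht.1 ht0

namespace StronglyConnected

variable {n : ℕ} {A : Matrix (Fin n) (Fin n) ℝ}

theorem forall_of_forall_adj (hsc : StronglyConnected A) {P : Fin n → Prop}
    (hP : ∀ u v, A u v ≠ 0 → P u → P v) {j : Fin n} (hj : P j) (i : Fin n) : P i := by
  rcases eq_or_ne i j with rfl | hij
  · exact hj
  have hpath := hsc i j hij
  clear hij
  induction hpath using Relation.TransGen.head_induction_on with
  | single h => exact hP _ _ h hj
  | head h _ ih => exact hP _ _ h ih

-- Maximum principle: `|v|` is maximal at some node, and maximality spreads along the edges of `G`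
-- until it reaches `i`.
theorem eq_zero_of_forall_ne (hsc : StronglyConnected A) {t : ℝ} (ht : 0 ≤ t) {i : Fin n}
    {v : Fin n → ℝ} (hvi : v i = 0)
    (hv : ∀ a, a ≠ i → (inDeg A a + t) * v a = ∑ l, |A a l| * v l) : v = 0 := by
  obtain ⟨a₀, -, hmax⟩ :=
    Finset.exists_max_image Finset.univ (fun a => |v a|) ⟨i, Finset.mem_univ i⟩
  set M := |v a₀|
  have hle a : |v a| ≤ M := hmax a (Finset.mem_univ a)
  have hstep : ∀ a b, A a b ≠ 0 → |v a| = M → |v b| = M := by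
    intro a b hab ha
    by_cases hai : a = i
    · subst hai
      have : M = 0 := by rw [← ha, hvi, abs_zero]
      exact le_antisymm (hle b) (this ▸ abs_nonneg _)
    have hsum : ∑ l, |A a l| * (M - |v l|) ≤ 0 := by
      have hd : 0 ≤ inDeg A a + t := add_nonneg (Finset.sum_nonneg fun _ _ => abs_nonneg _) ht
      have hmean : (inDeg A a + t) * M ≤ ∑ l, |A a l| * |v l| :=
        calc (inDeg A a + t) * M = |(inDeg A a + t) * v a| := by
              rw [abs_mul, ha, abs_of_nonneg hd]
          _ = |∑ l, |A a l| * v l| := by rw [hv a hai]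
          _ ≤ ∑ l, |A a l| * |v l| :=
              (Finset.abs_sum_le_sum_abs _ _).trans_eq (by simp only [abs_mul, abs_abs])
      rw [inDeg] at hmean
      simp only [mul_sub, Finset.sum_sub_distrib, ← Finset.sum_mul]
      nlinarith [mul_nonneg ht (abs_nonneg (v a₀))]
    have hterm l : 0 ≤ |A a l| * (M - |v l|) := mul_nonneg (abs_nonneg _) (sub_nonneg.mpr (hle l))
    have hb := (Finset.single_le_sum (fun l _ => hterm l) (Finset.mem_univ b)).trans hsum
    exact le_antisymm (hle b) (by nlinarith [abs_pos.mpr hab])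
  have hM : M = 0 := by
    rw [← hsc.forall_of_forall_adj hstep rfl i, hvi, abs_zero]
  funext a
  exact abs_nonpos_iff.mp (hM ▸ hle a)

end StronglyConnected

section Laplacian

variable {n : ℕ}

theorem lapBar_apply (A : Matrix (Fin n) (Fin n) ℝ) (i j : Fin n) :
    lapBar A i j = (if i = j then inDeg A i else 0) - |A i j| := by
  simp [lapBar, diagonal_apply]

theorem lapBar_mulVec_apply (A : Matrix (Fin n) (Fin n) ℝ) (v : Fin n → ℝ) (a : Fin n) :
    (lapBar A *ᵥ v) a = inDeg A a * v a - ∑ l, |A a l| * v l := by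
  rw [lapBar, sub_mulVec, Pi.sub_apply, mulVec_diagonal]
  rfl

theorem lapBar_add_smul_one_mulVec_apply (A : Matrix (Fin n) (Fin n) ℝ) (t : ℝ) (v : Fin n → ℝ)
    (a : Fin n) : ((lapBar A + t • 1) *ᵥ v) a = (inDeg A a + t) * v a - ∑ l, |A a l| * v l := by
  rw [add_mulVec, smul_mulVec, one_mulVec, Pi.add_apply, lapBar_mulVec_apply, Pi.smul_apply,
    smul_eq_mul]
  ring

theorem lapBar_mulVec_one (A : Matrix (Fin n) (Fin n) ℝ) : lapBar A *ᵥ (fun _ => 1) = 0 := by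
  funext a
  simp [lapBar_mulVec_apply, inDeg]

theorem det_lapBar (A : Matrix (Fin (n + 1)) (Fin (n + 1)) ℝ) : (lapBar A).det = 0 :=
  exists_mulVec_eq_zero_iff.mp ⟨_, Function.ne_iff.mpr ⟨0, one_ne_zero⟩, lapBar_mulVec_one A⟩

theorem StronglyConnected.eq_of_lapBar_mulVec_eq_zero {A : Matrix (Fin n) (Fin n) ℝ}
    (hsc : StronglyConnected A) {v : Fin n → ℝ} (hv : lapBar A *ᵥ v = 0) (j k : Fin n) :
    v j = v k := by
  have h := hsc.eq_zero_of_forall_ne le_rfl (i := k) (v := fun a => v a - v k) (sub_self _)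
    fun a _ => by
      have ha := congrFun hv a
      rw [lapBar_mulVec_apply, Pi.zero_apply] at ha
      simp only [add_zero, mul_sub, Finset.sum_sub_distrib, ← Finset.sum_mul]
      rw [inDeg] at ha ⊢
      linarith
  exact sub_eq_zero.mp (congrFun h j)

end Laplacian

theorem minorDet_eq_det_submatrix_succAbove {n : ℕ} (A : Matrix (Fin (n + 1)) (Fin (n + 1)) ℝ)
    (i : Fin (n + 1)) : minorDet A i = ((lapBar A).submatrix i.succAbove i.succAbove).det := by
  rw [minorDet, ← det_submatrix_equiv_self (finSuccAboveEquiv i), submatrix_submatrix]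
  rfl

namespace StronglyConnected

variable {n : ℕ} {A : Matrix (Fin (n + 1)) (Fin (n + 1)) ℝ}

theorem det_submatrix_lapBar_add_smul_one_ne_zero (hsc : StronglyConnected A) (i : Fin (n + 1))
    {t : ℝ} (ht : 0 ≤ t) : ((lapBar A).submatrix i.succAbove i.succAbove + t • 1).det ≠ 0 := by
  intro hdet
  obtain ⟨w, hw0, hw⟩ := exists_mulVec_eq_zero_iff.mpr hdet
  have hsub : (lapBar A + t • 1).submatrix i.succAbove i.succAbove
      = (lapBar A).submatrix i.succAbove i.succAbove + t • 1 := by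
    ext a b
    simp [one_apply, Fin.succAbove_right_injective.eq_iff]
  have hext := hsc.eq_zero_of_forall_ne ht (Fin.insertNth_apply_same i 0 w) fun a ha => by
    obtain ⟨b, rfl⟩ := Fin.exists_succAbove_eq ha
    have hb := congrFun hw b
    rw [← hsub, ← mulVec_insertNth_zero_succAbove, lapBar_add_smul_one_mulVec_apply] at hb
    exact sub_eq_zero.mp hb
  exact hw0 (funext fun b => by simpa using congrFun hext (i.succAbove b))

theorem minorDet_pos (hsc : StronglyConnected A) (i : Fin (n + 1)) : 0 < minorDet A i := by
  rw [minorDet_eq_det_submatrix_succAbove]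
  exact det_pos_of_forall_nonneg_det_add_smul_one_ne_zero _ fun t ht =>
    hsc.det_submatrix_lapBar_add_smul_one_ne_zero i ht

theorem adjugate_lapBar_apply (hsc : StronglyConnected A) (j k : Fin (n + 1)) :
    adjugate (lapBar A) j k = minorDet A k := by
  have hcol : lapBar A *ᵥ (fun l => adjugate (lapBar A) l k) = 0 := by
    funext a
    simpa [det_lapBar, mul_apply, mulVec, dotProduct] using
      congrFun (congrFun (mul_adjugate (lapBar A)) a) k
  rw [hsc.eq_of_lapBar_mulVec_eq_zero hcol j k, adjugate_fin_succ_eq_det_submatrix,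
    minorDet_eq_det_submatrix_succAbove, ← two_mul, pow_mul, neg_one_sq, one_pow, one_mul]

theorem sum_minorDet_mul_abs (hsc : StronglyConnected A) (j : Fin (n + 1)) :
    ∑ i, minorDet A i * |A i j| = minorDet A j * inDeg A j := by
  have h := congrFun (congrFun (adjugate_mul (lapBar A)) j) j
  simp only [det_lapBar, zero_smul, mul_apply, hsc.adjugate_lapBar_apply, lapBar_apply, mul_sub,
    Finset.sum_sub_distrib, mul_ite, mul_zero, Finset.sum_ite_eq', Finset.mem_univ, if_true,
    Matrix.zero_apply] at h
  linarith

end StronglyConnected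

theorem Real.abs_mul_sub_sign_mul_sq (a x y : ℝ) :
    |a| * (x - Real.sign a * y) ^ 2 = |a| * x ^ 2 - 2 * a * x * y + |a| * y ^ 2 := by
  rcases lt_trichotomy a 0 with ha | rfl | ha
  · rw [Real.sign_of_neg ha, abs_of_neg ha]; ring
  · simp
  · rw [Real.sign_of_pos ha, abs_of_pos ha]; ring

theorem PhiE_eq_two_mul_dotProduct {n : ℕ} {A : Matrix (Fin (n + 1)) (Fin (n + 1)) ℝ}
    (hsc : StronglyConnected A) (x : Fin (n + 1) → ℝ) :
    PhiE A x = 2 * (x ⬝ᵥ ((Wmat A * lapOf A) *ᵥ x)) := by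
  have hquad : x ⬝ᵥ ((Wmat A * lapOf A) *ᵥ x)
      = ∑ i, minorDet A i * inDeg A i * x i ^ 2 - ∑ i, ∑ j, minorDet A i * A i j * x i * x j := by
    rw [← mulVec_mulVec]
    simp only [dotProduct, Wmat, lapOf, mulVec_diagonal, sub_mulVec, Pi.sub_apply]
    simp only [mulVec, dotProduct, mul_sub, Finset.mul_sum, Finset.sum_sub_distrib]
    congr 1
    · exact Finset.sum_congr rfl fun i _ => by ring
    · exact Finset.sum_congr rfl fun i _ => Finset.sum_congr rfl fun j _ => by ring
  have hrow :
      ∑ i, ∑ j, minorDet A i * |A i j| * x i ^ 2 = ∑ i, minorDet A i * inDeg A i * x i ^ 2 :=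
    Finset.sum_congr rfl fun i _ => by simp only [inDeg, Finset.mul_sum, Finset.sum_mul]
  have hcol :
      ∑ i, ∑ j, minorDet A i * |A i j| * x j ^ 2 = ∑ i, minorDet A i * inDeg A i * x i ^ 2 := by
    rw [Finset.sum_comm]
    exact Finset.sum_congr rfl fun j _ => by
      rw [← Finset.sum_mul, hsc.sum_minorDet_mul_abs]
  calc PhiE A x
      = ∑ i, ∑ j, (minorDet A i * |A i j| * x i ^ 2 - 2 * (minorDet A i * A i j * x i * x j)
          + minorDet A i * |A i j| * x j ^ 2) := by
        refine Finset.sum_congr rfl fun i _ => Finset.sum_congr rfl fun j _ => ?_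
        rw [mul_assoc, Real.abs_mul_sub_sign_mul_sq]
        ring
    _ = 2 * (x ⬝ᵥ ((Wmat A * lapOf A) *ᵥ x)) := by
        simp only [Finset.sum_add_distrib, Finset.sum_sub_distrib, ← Finset.mul_sum, hrow, hcol,
          hquad]
        ring

theorem StronglyConnected.structBalanced_of_eq_sign_mul {n : ℕ} {A : Matrix (Fin n) (Fin n) ℝ}
    (hsc : StronglyConnected A) {x : Fin n → ℝ} (hx : x ≠ 0)
    (h : ∀ i j, A i j ≠ 0 → x i = Real.sign (A i j) * x j) : StructBalanced A := by
  obtain ⟨k, hk⟩ := Function.ne_iff.mp hx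
  have hc : 0 < |x k| := abs_pos.mpr hk
  have habs : ∀ i, |x i| = |x k| := hsc.forall_of_forall_adj (P := fun i => |x i| = |x k|)
    (fun u v huv hu => by
      rcases Real.sign_apply_eq_of_ne_zero _ huv with hs | hs <;> simp [← hu, h u v huv, hs])
    rfl
  refine ⟨fun i => x i / |x k|, fun i => ?_, fun i j => ?_⟩
  · rcases abs_eq hc.le |>.mp (habs i) with hi | hi
    · left; simp [hi, hc.ne']
    · right; simp [hi, hc.ne']
  · rcases eq_or_ne (A i j) 0 with hij | hij
    · simp [hij]
    · show 0 ≤ x i / |x k| * A i j * (x j / |x k|)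
      rw [h i j hij]
      have := Real.sign_mul_nonneg (A i j)
      calc (0 : ℝ) ≤ Real.sign (A i j) * A i j * (x j / |x k|) ^ 2 := by positivity
        _ = _ := by ring

theorem StronglyConnected.PhiE_pos {n : ℕ} {A : Matrix (Fin (n + 1)) (Fin (n + 1)) ℝ}
    (hsc : StronglyConnected A) (hA : ¬ StructBalanced A) {x : Fin (n + 1) → ℝ} (hx : x ≠ 0) :
    0 < PhiE A x := by
  have hterm i j : 0 ≤ minorDet A i * |A i j| * (x i - Real.sign (A i j) * x j) ^ 2 :=
    mul_nonneg (mul_nonneg (hsc.minorDet_pos i).le (abs_nonneg _)) (sq_nonneg _)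
  refine (Finset.sum_nonneg fun i _ => Finset.sum_nonneg fun j _ => hterm i j).lt_of_ne'
    fun h0 => ?_
  refine hA (hsc.structBalanced_of_eq_sign_mul hx fun i j hij => ?_)
  have hzero := (Finset.sum_eq_zero_iff_of_nonneg fun j _ => hterm i j).mp
    ((Finset.sum_eq_zero_iff_of_nonneg fun i _ =>
      Finset.sum_nonneg fun j _ => hterm i j).mp h0 i (Finset.mem_univ i)) j (Finset.mem_univ j)
  simpa [(hsc.minorDet_pos i).ne', hij, sub_eq_zero] using hzero

theorem lapOf_mulVec_eq_zero {n : ℕ} {A : Matrix (Fin n) (Fin n) ℝ} {σ : Fin n → ℝ}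
    (hσ : IsGauge σ) (hA : ∀ i j, 0 ≤ σ i * A i j * σ j) : lapOf A *ᵥ σ = 0 := by
  have habs i : |σ i| = 1 := by rcases hσ i with h | h <;> simp [h]
  have hsq i : σ i * σ i = 1 := by rcases hσ i with h | h <;> simp [h]
  have hedge i j : A i j * σ j = σ i * |A i j| := by
    have h : σ i * A i j * σ j = |A i j| := by
      rw [← abs_of_nonneg (hA i j), abs_mul, abs_mul, habs, habs, one_mul, mul_one]
    linear_combination σ i * h - A i j * σ j * hsq i
  funext i
  simp only [lapOf, sub_mulVec, Pi.sub_apply, mulVec_diagonal, Pi.zero_apply]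
  simp only [mulVec, dotProduct, hedge, ← Finset.mul_sum, inDeg]
  ring

theorem WL_state_stability_general (n : ℕ) (hn : 2 ≤ n)
    (A : Matrix (Fin n) (Fin n) ℝ)
    (hsc : StronglyConnected A) :
    ¬ StructBalanced A ↔
      ∀ x₀ : Fin n → ℝ,
        Filter.Tendsto (fun t : ℝ => NormedSpace.exp (-(t • (Wmat A * lapOf A))) *ᵥ x₀)
          Filter.atTop (nhds 0) := by
  obtain ⟨m, rfl⟩ : ∃ m, n = m + 1 := ⟨n - 1, by omega⟩
  constructor
  · intro hA
    obtain ⟨c, hc, hcoer⟩ := exists_pos_mul_dotProduct_self_le fun x hx => by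
      have := hsc.PhiE_pos hA hx
      rw [PhiE_eq_two_mul_dotProduct hsc] at this
      linarith
    exact tendsto_exp_neg_smul_mulVec_of_coercive hc hcoer
  · rintro hstab ⟨σ, hσ, hA⟩
    have hfix (t : ℝ) : NormedSpace.exp (-(t • (Wmat A * lapOf A))) *ᵥ σ = σ :=
      exp_mulVec_eq_self (by rw [neg_mulVec, smul_mulVec, ← mulVec_mulVec,
        lapOf_mulVec_eq_zero hσ hA, mulVec_zero, smul_zero, neg_zero])
    have hσ0 : σ = 0 := tendsto_nhds_unique tendsto_const_nhds ((hstab σ).congr hfix)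
    rcases hσ 0 with h | h <;> simp [hσ0] at h

/-- `ẋ = −W·L·x` achieves state stability iff `G` is structurally
unbalanced. -/
theorem WL_state_stability (n : ℕ) (hn : 2 ≤ n)
    (A : Matrix (Fin n) (Fin n) ℝ)
    (hdiag : ∀ i, A i i = 0) (hdigon : ∀ i j, 0 ≤ A i j * A j i)
    (hsc : StronglyConnected A) :
    ¬ StructBalanced A ↔
      ∀ x₀ : Fin n → ℝ,
        Filter.Tendsto (fun t : ℝ => NormedSpace.exp (-(t • (Wmat A * lapOf A))) *ᵥ x₀)
          Filter.atTop (nhds 0) :=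
  WL_state_stability_general n hn A hsc
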